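/- arXiv:2506.10611 — 4 statements merged into one kernel-verified Lean document; each statement's English description precedes it below -/
import Mathlib

section
/- Let $0 \le \gamma < 1$, $p > 1$, $a > 0$, $b > 0$. Then there exists a constant $K = K(a,b,p,\gamma) > 0$ such that: if $T \ge 1$ and $w \in C^1([0,T])$ is positive and satisfies $w'(t) + a\,w(t) \ge b \int_0^t (t-s)^{-\gamma} w(s)^p\,ds$ for all $t \in [0,T]$, then $w(0) < K$. -/
/-! Put `u t = exp (a t) * w t`. The hypothesis gives `u' ≥ b e^{at} ∫₀ᵗ (t - s)^{-γ} w(s)^p ds ≥ 0`,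
so `u` is nondecreasing on `[0, 1]`, where moreover the kernel is at least `1`. Hence
`u'(t) ≥ b e^{-ap} u(r)^p (t - r)` for `r < t ≤ 1`, and integrating,
`u(s) ≥ u(r) + b e^{-ap} u(r)^p (s - r)² / 2`. At the points `1 - 2⁻ⁿ` this yields a recurrence
`Aₙ₊₁ ≥ κ 4⁻ⁿ Aₙ^p`; if `A₀ = w(0)` is large, then `Aₙ ≥ D θⁿ` with `θ = 4^{1/(p-1)} > 1`,
contradicting `Aₙ ≤ u(1)`. -/

open MeasureTheory intervalIntegral Set Filter Real

theorem intervalIntegrable_sub_rpow_neg_mul {γ t : ℝ} {f : ℝ → ℝ} (hγ : γ < 1)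
    (hf : ContinuousOn f (uIcc 0 t)) :
    IntervalIntegrable (fun s => (t - s) ^ (-γ) * f s) volume 0 t := by
  have hker : IntervalIntegrable (fun s => (t - s) ^ (-γ)) volume 0 t := by
    simpa using ((intervalIntegrable_rpow' (a := 0) (b := t)
      (by linarith : (-1 : ℝ) < -γ)).comp_sub_left t).symm
  exact hker.mul_continuousOn hf

theorem mul_le_integral_sub_rpow_neg_mul {γ m r t : ℝ} {f : ℝ → ℝ} (hγ0 : 0 ≤ γ) (hγ1 : γ < 1)
    (hr : 0 ≤ r) (hrt : r ≤ t) (ht : t ≤ 1) (hf : ContinuousOn f (Icc 0 t))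
    (hf0 : ∀ s ∈ Icc 0 t, 0 ≤ f s) (hmf : ∀ s ∈ Icc r t, m ≤ f s) :
    (t - r) * m ≤ ∫ s in 0..t, (t - s) ^ (-γ) * f s := by
  have h0t : 0 ≤ t := hr.trans hrt
  have hint := intervalIntegrable_sub_rpow_neg_mul hγ1 (f := f) (by rwa [uIcc_of_le h0t])
  calc (t - r) * m = ∫ _ in r..t, m := by simp
    _ ≤ ∫ s in r..t, (t - s) ^ (-γ) * f s := by
      refine integral_mono_on_of_le_Ioo hrt intervalIntegrable_const
        (hint.mono_set ?_) fun s hs => ?_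
      · rw [uIcc_of_le hrt, uIcc_of_le h0t]; exact Icc_subset_Icc_left hr
      · have hker : 1 ≤ (t - s) ^ (-γ) :=
          one_le_rpow_of_pos_of_le_one_of_nonpos (by linarith [hs.2]) (by linarith [hs.1])
            (by linarith)
        have := hmf s (Ioo_subset_Icc_self hs)
        nlinarith [hf0 s ⟨hr.trans hs.1.le, hs.2.le⟩]
    _ ≤ ∫ s in 0..t, (t - s) ^ (-γ) * f s := by
      refine integral_mono_interval hr hrt le_rfl ?_ hint
      filter_upwards [ae_restrict_mem measurableSet_Ioc] with s hs
      exact mul_nonneg (rpow_nonneg (by linarith [hs.2]) _) (hf0 s (Ioc_subset_Icc_self hs))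

theorem add_mul_sq_le_of_mul_sub_le_deriv {u : ℝ → ℝ} {r s Q : ℝ} (hrs : r ≤ s)
    (hu : ContinuousOn u (Icc r s)) (hd : ∀ t ∈ Ioo r s, DifferentiableAt ℝ u t)
    (h : ∀ t ∈ Ioo r s, Q * (t - r) ≤ deriv u t) :
    u r + Q / 2 * (s - r) ^ 2 ≤ u s := by
  have hq : ∀ t, HasDerivAt (fun x => Q / 2 * (x - r) ^ 2) (Q * (t - r)) t := fun t =>
    ((((hasDerivAt_id' t).sub_const r).pow 2).const_mul (Q / 2)).congr_deriv (by ring)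
  have hmono : MonotoneOn (fun t => u t - Q / 2 * (t - r) ^ 2) (Icc r s) := by
    apply monotoneOn_of_deriv_nonneg (convex_Icc r s)
    · exact hu.sub (by fun_prop)
    · rw [interior_Icc]
      exact fun t ht => ((hd t ht).sub (hq t).differentiableAt).differentiableWithinAt
    · rw [interior_Icc]
      intro t ht
      rw [deriv_fun_sub (hd t ht) (hq t).differentiableAt, (hq t).deriv]
      linarith [h t ht]
  have := hmono (left_mem_Icc.2 hrs) (right_mem_Icc.2 hrs) hrs
  simp only [sub_self, ne_eq, OfNat.ofNat_ne_zero, not_false_eq_true, zero_pow, mul_zero] at this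
  linarith

theorem exists_tendsto_atTop_of_le_mul_rpow_div_pow {p κ q : ℝ} (hp : 1 < p) (hκ : 0 < κ)
    (hq : 1 < q) :
    ∃ D > 0, ∀ A : ℕ → ℝ, D ≤ A 0 → (∀ n, κ * A n ^ p / q ^ n ≤ A (n + 1)) →
      Tendsto A atTop atTop := by
  have hp1 : p - 1 ≠ 0 := by linarith
  set θ := q ^ (p - 1)⁻¹
  have hθ : 1 < θ := one_lt_rpow hq (inv_pos.2 (by linarith))
  have hθq : θ ^ (p - 1) = q := rpow_inv_rpow (by linarith) hp1
  set D := (θ / κ) ^ (p - 1)⁻¹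
  have hD : 0 < D := by positivity
  have hDθ : D ^ (p - 1) = θ / κ := rpow_inv_rpow (by positivity) hp1
  refine ⟨D, hD, fun A hA0 hA => ?_⟩
  -- `θ` and `D` are chosen so that `n ↦ D θⁿ` solves the recurrence with equality.
  have hgeom : ∀ n, D * θ ^ n ≤ A n := by
    intro n
    induction n with
    | zero => simpa using hA0
    | succ n ih =>
      have hx : 0 < D * θ ^ n := by positivity
      have hsub : κ * (D * θ ^ n) ^ p / q ^ n = D * θ ^ (n + 1) := by
        have hpow : (D * θ ^ n) ^ p = (D * θ ^ n) ^ (p - 1) * (D * θ ^ n) := by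
          rw [rpow_sub_one hx.ne', div_mul_cancel₀ _ hx.ne']
        rw [hpow, mul_rpow hD.le (by positivity), ← rpow_pow_comm (by positivity), hθq, hDθ]
        field_simp
        ring
      calc D * θ ^ (n + 1) = κ * (D * θ ^ n) ^ p / q ^ n := hsub.symm
        _ ≤ κ * A n ^ p / q ^ n := by gcongr
        _ ≤ A (n + 1) := hA n
  exact tendsto_atTop_mono hgeom
    ((tendsto_pow_atTop_atTop_of_one_lt hθ).const_mul_atTop hD)

theorem exists_apply_zero_lt_of_superlinear_growth {p c : ℝ} (hp : 1 < p) (hc : 0 < c) :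
    ∃ D > 0, ∀ u : ℝ → ℝ, (∀ t ∈ Icc 0 1, 0 ≤ u t) →
      (∀ r s, 0 ≤ r → r ≤ s → s ≤ 1 → u r + c * u r ^ p / 2 * (s - r) ^ 2 ≤ u s) → u 0 < D := by
  obtain ⟨D, hD, hgrow⟩ :=
    exists_tendsto_atTop_of_le_mul_rpow_div_pow hp (by positivity : 0 < c / 8)
      (by norm_num : (1 : ℝ) < 4)
  refine ⟨D, hD, fun u hu0 step => ?_⟩
  by_contra! hD0
  set A : ℕ → ℝ := fun n => u (1 - (1 / 2) ^ n)
  have hdyadic : ∀ n : ℕ, 0 ≤ 1 - (1 / 2 : ℝ) ^ n ∧ 1 - (1 / 2 : ℝ) ^ n ≤ 1 := fun n =>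
    ⟨by linarith [pow_le_one₀ (n := n) (by norm_num : (0 : ℝ) ≤ 1 / 2) (by norm_num)],
      by linarith [pow_pos (by norm_num : (0 : ℝ) < 1 / 2) n]⟩
  have hA : ∀ n, 0 ≤ A n := fun n => hu0 _ (hdyadic n)
  have hrec : ∀ n, c / 8 * A n ^ p / 4 ^ n ≤ A (n + 1) := by
    intro n
    have hgap : ((1 - (1 / 2 : ℝ) ^ (n + 1)) - (1 - (1 / 2) ^ n)) ^ 2 = 1 / 4 / 4 ^ n := by
      rw [show (4 : ℝ) ^ n = (2 ^ n) ^ 2 by rw [← pow_mul, mul_comm, pow_mul]; norm_num]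
      simp only [div_pow, one_pow]
      field_simp
      ring
    have hnext : 1 - (1 / 2 : ℝ) ^ n ≤ 1 - (1 / 2) ^ (n + 1) := by
      rw [pow_succ]; linarith [pow_pos (by norm_num : (0 : ℝ) < 1 / 2) n]
    calc c / 8 * A n ^ p / 4 ^ n
        = c * A n ^ p / 2 * ((1 - (1 / 2) ^ (n + 1)) - (1 - (1 / 2) ^ n)) ^ 2 := by
          rw [hgap]; ring
      _ ≤ A (n + 1) := (le_add_of_nonneg_left (hA n)).trans
          (step _ _ (hdyadic n).1 hnext (hdyadic (n + 1)).2)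
  have hbound : ∀ n, A n ≤ u 1 := fun n =>
    (le_add_of_nonneg_right (by have := hA n; positivity)).trans
      (step _ 1 (hdyadic n).1 (hdyadic n).2 le_rfl)
  obtain ⟨n, hn⟩ := ((hgrow A (by simpa [A] using hD0) hrec).eventually_gt_atTop (u 1)).exists
  linarith [hbound n]

theorem hasDerivAt_exp_mul_mul {a t : ℝ} {w : ℝ → ℝ} (hw : DifferentiableAt ℝ w t) :
    HasDerivAt (fun t => exp (a * t) * w t) (exp (a * t) * (deriv w t + a * w t)) t :=
  ((((hasDerivAt_id' t).const_mul a).exp).mul hw.hasDerivAt).congr_deriv (by ring)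

theorem monotoneOn_exp_mul_of_memory_ineq {γ p a b : ℝ} {w : ℝ → ℝ} (hb : 0 ≤ b)
    (hwc : ContinuousOn w (Icc 0 1)) (hwd : ∀ t ∈ Ioo 0 1, DifferentiableAt ℝ w t)
    (hw0 : ∀ t ∈ Icc 0 1, 0 ≤ w t)
    (hineq : ∀ t ∈ Ioo 0 1, b * ∫ s in 0..t, (t - s) ^ (-γ) * w s ^ p ≤ deriv w t + a * w t) :
    MonotoneOn (fun t => exp (a * t) * w t) (Icc 0 1) := by
  have hc : ContinuousOn (fun t => exp (a * t) * w t) (Icc 0 1) :=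
    (by fun_prop : Continuous fun t => exp (a * t)).continuousOn.mul hwc
  apply monotoneOn_of_deriv_nonneg (convex_Icc 0 1) hc
  · rw [interior_Icc]
    exact fun t ht => (hasDerivAt_exp_mul_mul (hwd t ht)).differentiableAt.differentiableWithinAt
  · rw [interior_Icc]
    intro t ht
    rw [(hasDerivAt_exp_mul_mul (hwd t ht)).deriv]
    have hI : 0 ≤ ∫ s in 0..t, (t - s) ^ (-γ) * w s ^ p :=
      integral_nonneg ht.1.le fun s hs => mul_nonneg (rpow_nonneg (by linarith [hs.2]) _)
        (rpow_nonneg (hw0 s ⟨hs.1, by linarith [hs.2, ht.2]⟩) _)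
    exact mul_nonneg (exp_pos _).le ((mul_nonneg hb hI).trans (hineq t ht))

theorem exp_mul_add_le_of_memory_ineq {γ p a b r s : ℝ} {w : ℝ → ℝ} (hγ0 : 0 ≤ γ) (hγ1 : γ < 1)
    (hp : 0 ≤ p) (ha : 0 ≤ a) (hb : 0 ≤ b)
    (hwc : ContinuousOn w (Icc 0 1)) (hwd : ∀ t ∈ Ioo 0 1, DifferentiableAt ℝ w t)
    (hw0 : ∀ t ∈ Icc 0 1, 0 ≤ w t)
    (hineq : ∀ t ∈ Ioo 0 1, b * ∫ s in 0..t, (t - s) ^ (-γ) * w s ^ p ≤ deriv w t + a * w t)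
    (hr : 0 ≤ r) (hrs : r ≤ s) (hs : s ≤ 1) :
    exp (a * r) * w r + b * exp (-(a * p)) * (exp (a * r) * w r) ^ p / 2 * (s - r) ^ 2 ≤
      exp (a * s) * w s := by
  set u := fun t => exp (a * t) * w t
  have hmono := monotoneOn_exp_mul_of_memory_ineq hb hwc hwd hw0 hineq
  have hsub : Icc r s ⊆ Icc 0 1 := Icc_subset_Icc hr hs
  have hu0 : 0 ≤ u r := mul_nonneg (exp_pos _).le (hw0 r ⟨hr, hrs.trans hs⟩)
  have hIoo : ∀ t ∈ Ioo r s, t ∈ Ioo 0 1 := fun t ht => ⟨hr.trans_lt ht.1, ht.2.trans_le hs⟩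
  refine add_mul_sq_le_of_mul_sub_le_deriv (u := u) hrs
    (((by fun_prop : Continuous fun t => exp (a * t)).continuousOn.mul hwc).mono hsub)
    (fun t ht => (hasDerivAt_exp_mul_mul (hwd t (hIoo t ht))).differentiableAt) fun t ht => ?_
  have ht01 := hIoo t ht
  rw [(hasDerivAt_exp_mul_mul (hwd t ht01)).deriv]
  have hlow : ∀ x ∈ Icc r t, exp (-a) * u r ≤ w x := by
    intro x hx
    have hx01 : x ∈ Icc (0 : ℝ) 1 := ⟨hr.trans hx.1, hx.2.trans ht01.2.le⟩
    have hux : 0 ≤ u x := mul_nonneg (exp_pos _).le (hw0 x hx01)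
    calc exp (-a) * u r ≤ exp (-a) * u x := by gcongr; exact hmono ⟨hr, hrs.trans hs⟩ hx01 hx.1
      _ ≤ exp (-(a * x)) * u x := by gcongr; nlinarith [hx01.2]
      _ = w x := by simp only [u, ← mul_assoc, ← exp_add]; simp
  have hI := mul_le_integral_sub_rpow_neg_mul hγ0 hγ1 hr ht.1.le ht01.2.le
    (f := fun x => w x ^ p) (m := (exp (-a) * u r) ^ p)
    ((hwc.mono (Icc_subset_Icc_right ht01.2.le)).rpow_const fun _ _ => Or.inr hp)
    (fun x hx => rpow_nonneg (hw0 x ⟨hx.1, hx.2.trans ht01.2.le⟩) _)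
    (fun x hx => rpow_le_rpow (by positivity) (hlow x hx) hp)
  have hIb := (mul_le_mul_of_nonneg_left hI hb).trans (hineq t ht01)
  calc b * exp (-(a * p)) * u r ^ p * (t - r) = b * ((t - r) * (exp (-a) * u r) ^ p) := by
        rw [mul_rpow (exp_pos _).le hu0, ← exp_mul]; ring_nf
    _ ≤ deriv w t + a * w t := hIb
    _ ≤ exp (a * t) * (deriv w t + a * w t) :=
      le_mul_of_one_le_left
        ((mul_nonneg hb (mul_nonneg (by linarith [ht.1]) (by positivity))).trans hIb)
        (one_le_exp (mul_nonneg ha ht01.1.le))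

theorem ode_lemma_i (γ p a b : ℝ) (hγ0 : 0 ≤ γ) (hγ1 : γ < 1) (hp : 1 < p)
    (ha : 0 < a) (hb : 0 < b) :
    ∃ K : ℝ, 0 < K ∧ ∀ (T : ℝ) (w : ℝ → ℝ), 1 ≤ T →
      ContDiffOn ℝ 1 w (Set.Icc 0 T) →
      (∀ t ∈ Set.Icc (0 : ℝ) T, 0 < w t) →
      (∀ t ∈ Set.Icc (0 : ℝ) T,
        deriv w t + a * w t ≥ b * ∫ s in (0 : ℝ)..t, (t - s) ^ (-γ) * w s ^ p) →
      w 0 < K := by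
  obtain ⟨K, hK, hbound⟩ :=
    exists_apply_zero_lt_of_superlinear_growth hp (by positivity : 0 < b * exp (-(a * p)))
  refine ⟨K, hK, fun T w hT hw hpos hineq => ?_⟩
  have hwd : ∀ t ∈ Ioo 0 1, DifferentiableAt ℝ w t := fun t ht =>
    (hw.differentiableOn one_ne_zero t ⟨ht.1.le, ht.2.le.trans hT⟩).differentiableAt
      (Icc_mem_nhds ht.1 (ht.2.trans_le hT))
  have hw0 : ∀ t ∈ Icc 0 1, 0 ≤ w t := fun t ht => (hpos t ⟨ht.1, ht.2.trans hT⟩).le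
  simpa using hbound (fun t => exp (a * t) * w t)
    (fun t ht => mul_nonneg (exp_pos _).le (hw0 t ht))
    (fun r s => exp_mul_add_le_of_memory_ineq hγ0 hγ1 (by linarith) ha.le hb.le
      (hw.continuousOn.mono (Icc_subset_Icc_right hT)) hwd hw0
      (fun t ht => hineq t ⟨ht.1.le, ht.2.le.trans hT⟩))
end

section
/- Let $0 < \gamma < 1$, $p > 1$ with $p\gamma \le 1$, and $a, b > 0$. Then there is no positive function $w \in C^1([0,\infty))$ satisfying $w'(t) + a\,w(t) \ge b \int_0^t (t-s)^{-\gamma} w(s)^p\,ds$ for all $t > 0$. In other words, any positive $C^1$ solution of this integral-differential inequality exists only on a bounded time interval. -/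
/-!
Write `v t = t ^ γ * w t` and `G x = ∫ s in 2..x, v s ^ p / s`. Integrating
`(exp (a t) * w t)' ≥ b * exp (a t) * ∫ s in 0..t, (t - s) ^ (-γ) * w s ^ p` over `[t - δ, t]`
and using `v s ^ p / s ≤ w s ^ p` (this is where `p * γ ≤ 1` enters) gives
`v t ≥ b * exp (-a) * δ * G z` whenever `z + δ ≤ t` and `δ ≤ 1`, hence
`G x ≥ G x' + (x - x') / x * (b * exp (-a) * δ * G z) ^ p` for `z + δ ≤ x' ≤ x`.
Since `v` is also bounded below, `G` grows at least logarithmically. Iterating the inequality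
along `x ↦ 2 * x + 2` makes `G` grow faster than any power of `x`; once `G X` is large enough
compared with `X`, iterating it with steps `δ = 2 ^ (-(n + 1))` inside `[X, X + 2]` makes
`log G` grow linearly in `n`, so `G` would blow up before `X + 2`.
-/

open MeasureTheory intervalIntegral Real Set Filter

theorem add_mul_le_of_superlinear_recurrence {ℓ : ℕ → ℝ} {k p lam m s : ℝ} (hp : 0 ≤ p)
    (hlam : lam ≤ (p - 1) * s) (hs : s ≤ k + (p - 1) * m) (h0 : m ≤ ℓ 0)
    (hrec : ∀ n : ℕ, k + p * ℓ n - n * lam ≤ ℓ (n + 1)) (n : ℕ) : m + n * s ≤ ℓ n := by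
  induction n with
  | zero => simpa using h0
  | succ n ih =>
    have hpℓ := mul_le_mul_of_nonneg_left ih hp
    have hn := mul_le_mul_of_nonneg_left hlam n.cast_nonneg
    push_cast
    linarith [hrec n]

def HasDelayedRpowGrowth (G : ℝ → ℝ) (p c x₀ : ℝ) : Prop :=
  ∀ ⦃z δ x' x : ℝ⦄, x₀ ≤ z → 0 < δ → δ ≤ 1 → z + δ ≤ x' → x' ≤ x →
    G x' + (x - x') / x * (c * δ * G z) ^ p ≤ G x

namespace HasDelayedRpowGrowth

variable {G : ℝ → ℝ} {p c x₀ : ℝ}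

theorem log_le (hG : HasDelayedRpowGrowth G p c x₀) (hc : 0 < c) (hx₀ : 0 ≤ x₀)
    (hmono : MonotoneOn G (Ici x₀)) {z δ x' x : ℝ} (hz : x₀ ≤ z) (hGz : 0 < G z) (hδ : 0 < δ)
    (hδ1 : δ ≤ 1) (hzx' : z + δ ≤ x') (hx'x : x' < x) :
    log (x - x') - log x + p * (log c + log δ + log (G z)) ≤ log (G x) := by
  have hx : 0 < x := by linarith
  have hL : 0 < (x - x') / x * (c * δ * G z) ^ p := by
    have := sub_pos.2 hx'x
    positivity
  have hGx' : 0 < G x' :=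
    hGz.trans_le (hmono hz (show x₀ ≤ x' by linarith) (by linarith))
  have hle := hG hz hδ hδ1 hzx' hx'x.le
  calc log (x - x') - log x + p * (log c + log δ + log (G z))
      = log ((x - x') / x * (c * δ * G z) ^ p) := by
        have hx'x' : 0 < x - x' := sub_pos.2 hx'x
        rw [log_mul (by positivity) (by positivity), log_div hx'x'.ne' hx.ne',
          log_rpow (by positivity), log_mul (by positivity) hGz.ne', log_mul hc.ne' hδ.ne']
    _ ≤ log (G x) := log_le_log hL (by linarith)

theorem exists_le_log (hG : HasDelayedRpowGrowth G p c x₀) (hp : 1 < p) (hc : 0 < c)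
    (hx₀ : 0 ≤ x₀) (hmono : MonotoneOn G (Ici x₀)) (htop : Tendsto G atTop atTop) (A : ℝ) :
    ∃ X, x₀ ≤ X ∧ 0 < G X ∧ A + log (X + 2) ≤ (p - 1) * log (G X) := by
  set k := p * log c - log 2
  set s := (1 + log 2) / (p - 1)
  set m := (s - k) / (p - 1)
  have hp1 : 0 < p - 1 := by linarith
  obtain ⟨x₁, hGx₁, hx₁⟩ :=
    ((htop.eventually_ge_atTop (exp m)).and (eventually_ge_atTop x₀)).exists
  set X : ℕ → ℝ := fun n => (x₁ + 2) * 2 ^ n - 2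
  have hX : ∀ n, x₁ ≤ X n := fun n => by
    have : (1 : ℝ) ≤ 2 ^ n := one_le_pow₀ one_le_two
    simp only [X]; nlinarith
  have hGX : ∀ n, 0 < G (X n) := fun n =>
    (exp_pos m).trans_le (hGx₁.trans (hmono hx₁ (hx₁.trans (hX n)) (hX n)))
  have hlog2 : 0 < log 2 := log_pos one_lt_two
  have hgrowth : ∀ n : ℕ, m + n * s ≤ log (G (X n)) := by
    refine add_mul_le_of_superlinear_recurrence (k := k) (lam := 0) (by linarith)
      (mul_nonneg hp1.le (div_nonneg (by linarith) hp1.le)) ?_ ?_ ?_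
    · have hm : (p - 1) * m = s - k := mul_div_cancel₀ _ hp1.ne'
      linarith
    · exact (le_log_iff_exp_le (hGX 0)).2 (by simpa [X] using hGx₁)
    · intro n
      have hXn : 0 < X n + 1 := by linarith [hX n]
      have hsucc : X (n + 1) = 2 * (X n + 1) := by simp only [X, pow_succ]; ring
      have hstep := hG.log_le hc hx₀ hmono (hx₁.trans (hX n)) (hGX n) one_pos le_rfl le_rfl
        (x := X (n + 1)) (by linarith)
      rw [hsucc, show 2 * (X n + 1) - (X n + 1) = X n + 1 by ring, log_mul two_ne_zero hXn.ne',
        log_one] at hstep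
      rw [hsucc]
      linarith
  obtain ⟨n, hn⟩ := exists_nat_ge (A + log (x₁ + 2) - (p - 1) * m)
  refine ⟨X n, hx₁.trans (hX n), hGX n, ?_⟩
  have hlogX : log (X n + 2) = log (x₁ + 2) + n * log 2 := by
    rw [show X n + 2 = (x₁ + 2) * 2 ^ n by simp only [X]; ring,
      log_mul (by linarith) (by positivity), log_pow]
  have := mul_le_mul_of_nonneg_left (hgrowth n) hp1.le
  have hs : (p - 1) * s = 1 + log 2 := mul_div_cancel₀ _ hp1.ne'
  rw [hlogX]
  nlinarith

theorem false_of_le_log (hG : HasDelayedRpowGrowth G p c x₀) (hp : 1 < p) (hc : 0 < c)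
    (hx₀ : 0 ≤ x₀) (hmono : MonotoneOn G (Ici x₀)) {X : ℝ} (hX : x₀ ≤ X) (hGX : 0 < G X)
    (hlarge : (p + 1) * log 2 / (p - 1) + (p + 1) * log 2 - p * log c + log (X + 2)
      ≤ (p - 1) * log (G X)) : False := by
  set lam := (p + 1) * log 2
  set s := lam / (p - 1)
  have hp1 : 0 < p - 1 := by linarith
  have hs : 0 < s := div_pos (mul_pos (by linarith) (log_pos one_lt_two)) hp1
  set δ : ℕ → ℝ := fun n => (2 ^ (n + 1))⁻¹
  set y : ℕ → ℝ := fun n => X + 2 - 2 / 2 ^ n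
  have hy : ∀ n, X ≤ y n ∧ y n ≤ X + 2 := fun n => by
    have : 2 / (2 : ℝ) ^ n ≤ 2 := div_le_self zero_le_two (one_le_pow₀ one_le_two)
    constructor <;> simp only [y] <;> linarith [show 0 ≤ 2 / (2 : ℝ) ^ n by positivity]
  have hsucc : ∀ n, y (n + 1) = y n + 2 * δ n := fun n => by
    simp only [y, δ, pow_succ]; field_simp; ring
  have hmemX : ∀ n, y n ∈ Ici x₀ := fun n => hX.trans (hy n).1
  have hGy : ∀ n, 0 < G (y n) := fun n => hGX.trans_le (hmono hX (hmemX n) (hy n).1)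
  have hgrowth : ∀ n : ℕ, log (G X) + n * s ≤ log (G (y n)) := by
    refine add_mul_le_of_superlinear_recurrence (k := p * log c - lam - log (X + 2)) (p := p)
      (lam := lam) (s := s) (by linarith) (mul_div_cancel₀ _ hp1.ne').ge (by linarith)
      (by simp [y]) fun n => ?_
    have hδ : 0 < δ n := by positivity
    have hstep := hG.log_le hc hx₀ hmono (hmemX n) (hGy n) hδ
      (inv_le_one_of_one_le₀ (one_le_pow₀ one_le_two)) le_rfl (x := y (n + 1))
      (by rw [hsucc]; linarith)
    have hlogδ : log (δ n) = -((n + 1) * log 2) := by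
      simp only [δ]; rw [log_inv, log_pow]; push_cast; ring
    have hlogy : log (y (n + 1)) ≤ log (X + 2) :=
      log_le_log (by rw [hsucc]; linarith [(hy n).1]) (hy (n + 1)).2
    rw [hsucc, show y n + 2 * δ n - (y n + δ n) = δ n by ring, ← hsucc, hlogδ] at hstep
    nlinarith
  obtain ⟨n, hn⟩ := exists_nat_gt ((log (G (X + 2)) - log (G X)) / s)
  have hbound : log (G (y n)) ≤ log (G (X + 2)) :=
    log_le_log (hGy n) (hmono (hmemX n) (show x₀ ≤ X + 2 by linarith) (hy n).2)
  have := (div_lt_iff₀ hs).1 hn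
  linarith [hgrowth n]

theorem not_tendsto_atTop (hG : HasDelayedRpowGrowth G p c x₀) (hp : 1 < p) (hc : 0 < c)
    (hx₀ : 0 ≤ x₀) (hmono : MonotoneOn G (Ici x₀)) : ¬ Tendsto G atTop atTop := fun htop => by
  obtain ⟨X, hX, hGX, hlarge⟩ := hG.exists_le_log hp hc hx₀ hmono htop
    ((p + 1) * log 2 / (p - 1) + (p + 1) * log 2 - p * log c)
  exact hG.false_of_le_log hp hc hx₀ hmono hX hGX hlarge

end HasDelayedRpowGrowth

theorem rpow_neg_mul_integral_le_integral_kernel {f q : ℝ → ℝ} {γ u z x : ℝ} (hγ0 : 0 ≤ γ)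
    (hγ1 : γ < 1) (hf : ContinuousOn f (Icc 0 x)) (hf0 : ∀ s ∈ Icc 0 x, 0 ≤ f s) (hu : 0 ≤ u)
    (huz : u ≤ z) (hzx : z < x) (hq : IntervalIntegrable q volume u z)
    (hqf : ∀ s ∈ Icc u z, q s ≤ f s) :
    x ^ (-γ) * ∫ s in u..z, q s ≤ ∫ s in 0..x, (x - s) ^ (-γ) * f s := by
  have hx : 0 ≤ x := by linarith
  have hker : IntervalIntegrable (fun s => (x - s) ^ (-γ) * f s) volume 0 x := by
    have := (intervalIntegrable_rpow' (r := -γ) (a := 0) (b := x) (by linarith)).comp_sub_left x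
    simp only [sub_zero, sub_self] at this
    exact this.symm.mul_continuousOn (by rwa [uIcc_of_le hx])
  have hsub : uIcc u z ⊆ uIcc 0 x := by
    rw [uIcc_of_le huz, uIcc_of_le hx]; exact Icc_subset_Icc hu hzx.le
  calc x ^ (-γ) * ∫ s in u..z, q s = ∫ s in u..z, x ^ (-γ) * q s :=
        (intervalIntegral.integral_const_mul _ _).symm
    _ ≤ ∫ s in u..z, (x - s) ^ (-γ) * f s := by
      refine integral_mono_on huz (hq.const_mul _) (hker.mono_set hsub) fun s hs => ?_
      have hs0 : 0 ≤ f s := hf0 s ⟨hu.trans hs.1, hs.2.trans hzx.le⟩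
      calc x ^ (-γ) * q s ≤ x ^ (-γ) * f s :=
            mul_le_mul_of_nonneg_left (hqf s hs) (rpow_nonneg hx _)
        _ ≤ (x - s) ^ (-γ) * f s := mul_le_mul_of_nonneg_right
            (rpow_le_rpow_of_nonpos (by linarith [hs.2]) (by linarith [hu.trans hs.1])
              (neg_nonpos.2 hγ0)) hs0
    _ ≤ ∫ s in 0..x, (x - s) ^ (-γ) * f s := by
      refine integral_mono_interval hu huz hzx.le ?_ hker
      filter_upwards [ae_restrict_mem measurableSet_Ioc] with s hs
      exact mul_nonneg (rpow_nonneg (by linarith [hs.2]) _) (hf0 s ⟨hs.1.le, hs.2⟩)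

theorem mul_mul_exp_le_of_le_deriv_add_mul {w w' : ℝ → ℝ} {a K t δ : ℝ} (ha : 0 ≤ a)
    (hK : 0 ≤ K) (hδ : 0 ≤ δ) (hw : ContinuousOn w (Icc (t - δ) t))
    (hw' : ∀ x ∈ Ioo (t - δ) t, HasDerivAt w (w' x) x)
    (hKw : ∀ x ∈ Ioo (t - δ) t, K ≤ w' x + a * w x) (hw0 : 0 ≤ w (t - δ)) :
    K * δ * exp (-(a * δ)) ≤ w t := by
  set f : ℝ → ℝ := fun x => exp (a * x) * w x
  have hf' : ∀ x ∈ Ioo (t - δ) t, HasDerivAt f (exp (a * x) * (w' x + a * w x)) x := by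
    intro x hx
    exact (((hasDerivAt_id x).const_mul a).exp.mul (hw' x hx)).congr_deriv
      (by simp only [id, mul_one]; ring)
  have hmvt := (convex_Icc (t - δ) t).mul_sub_le_image_sub_of_le_deriv (f := f)
    (C := exp (a * (t - δ)) * K)
    ((by fun_prop : Continuous fun x => exp (a * x)).continuousOn.mul hw)
    (by rw [interior_Icc]; exact fun x hx => (hf' x hx).differentiableAt.differentiableWithinAt)
    (by
      rw [interior_Icc]
      intro x hx
      rw [(hf' x hx).deriv]
      exact mul_le_mul (exp_le_exp.2 (mul_le_mul_of_nonneg_left hx.1.le ha)) (hKw x hx) hK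
        (exp_pos _).le)
    (t - δ) (left_mem_Icc.2 (by linarith)) t (right_mem_Icc.2 (by linarith)) (by linarith)
  have hft : exp (a * t) * (K * δ * exp (-(a * δ))) ≤ exp (a * t) * w t := by
    have hexp : exp (a * t) * exp (-(a * δ)) = exp (a * (t - δ)) := by rw [← exp_add]; ring_nf
    have := mul_nonneg (exp_pos (a * (t - δ))).le hw0
    simp only [f, sub_sub_cancel] at hmvt
    calc exp (a * t) * (K * δ * exp (-(a * δ))) = exp (a * (t - δ)) * K * δ := by
          rw [← hexp]; ring
      _ ≤ exp (a * t) * w t := by linarith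
  exact le_of_mul_le_mul_left hft (exp_pos _)

noncomputable def weightedPower (γ p : ℝ) (w : ℝ → ℝ) (s : ℝ) : ℝ := s⁻¹ * (s ^ γ * w s) ^ p

noncomputable def weightedIntegral (γ p : ℝ) (w : ℝ → ℝ) (x : ℝ) : ℝ :=
  ∫ s in (2 : ℝ)..x, weightedPower γ p w s

structure IsPositiveSupersolution (γ p a b : ℝ) (w : ℝ → ℝ) : Prop where
  contDiffOn : ContDiffOn ℝ 1 w (Ici 0)
  pos : ∀ t ∈ Ici (0 : ℝ), 0 < w t
  memory_le : ∀ t > (0 : ℝ),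
    deriv w t + a * w t ≥ b * ∫ s in (0 : ℝ)..t, (t - s) ^ (-γ) * w s ^ p

namespace IsPositiveSupersolution

variable {γ p a b : ℝ} {w : ℝ → ℝ}

theorem continuousOn (hw : IsPositiveSupersolution γ p a b w) : ContinuousOn w (Ici 0) :=
  hw.contDiffOn.continuousOn

theorem hasDerivAt (hw : IsPositiveSupersolution γ p a b w) {t : ℝ} (ht : 0 < t) :
    HasDerivAt w (deriv w t) t :=
  ((hw.contDiffOn.contDiffAt (Ici_mem_nhds ht)).differentiableAt one_ne_zero).hasDerivAt

theorem continuousOn_rpow (hw : IsPositiveSupersolution γ p a b w) :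
    ContinuousOn (fun s => w s ^ p) (Ici 0) :=
  hw.continuousOn.rpow_const fun s hs => Or.inl (hw.pos s hs).ne'

theorem mul_integral_le (hw : IsPositiveSupersolution γ p a b w) (hγ0 : 0 ≤ γ) (hγ1 : γ < 1)
    (ha : 0 ≤ a) (hb : 0 ≤ b) {q : ℝ → ℝ} {u z δ t : ℝ} (hu : 0 ≤ u) (huz : u ≤ z) (hδ : 0 < δ)
    (hδ1 : δ ≤ 1) (hzt : z + δ ≤ t) (hq : IntervalIntegrable q volume u z)
    (hq0 : ∀ s ∈ Icc u z, 0 ≤ q s) (hqw : ∀ s ∈ Icc u z, q s ≤ w s ^ p) :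
    b * exp (-a) * δ * ∫ s in u..z, q s ≤ t ^ γ * w t := by
  set R := ∫ s in u..z, q s
  have hR : 0 ≤ R := integral_nonneg huz hq0
  have ht : 0 < t := by linarith
  have hlower : ∀ x ∈ Ioo (t - δ) t, b * t ^ (-γ) * R ≤ deriv w x + a * w x := by
    intro x hx
    have hx0 : 0 < x := by linarith [hx.1]
    calc b * t ^ (-γ) * R ≤ b * (x ^ (-γ) * R) := by
          rw [mul_assoc]
          exact mul_le_mul_of_nonneg_left (mul_le_mul_of_nonneg_right
            (rpow_le_rpow_of_nonpos hx0 hx.2.le (neg_nonpos.2 hγ0)) hR) hb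
      _ ≤ b * ∫ s in (0 : ℝ)..x, (x - s) ^ (-γ) * w s ^ p := by
          refine mul_le_mul_of_nonneg_left (rpow_neg_mul_integral_le_integral_kernel hγ0 hγ1
            (hw.continuousOn_rpow.mono Icc_subset_Ici_self) (fun s hs => ?_) hu huz
            (by linarith [hx.1]) hq hqw) hb
          exact rpow_nonneg (hw.pos s hs.1).le _
      _ ≤ deriv w x + a * w x := hw.memory_le x hx0
  have hwt := mul_mul_exp_le_of_le_deriv_add_mul ha
    (mul_nonneg (mul_nonneg hb (rpow_nonneg ht.le _)) hR) hδ.le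
    (hw.continuousOn.mono fun x hx => (by linarith [hx.1] : (0 : ℝ) ≤ x))
    (fun x hx => hw.hasDerivAt (by linarith [hx.1])) hlower
    (hw.pos _ (show (0 : ℝ) ≤ t - δ by linarith)).le
  have hcancel : t ^ γ * t ^ (-γ) = 1 := by rw [← rpow_add ht, add_neg_cancel, rpow_zero]
  have hexp : exp (-a) ≤ exp (-(a * δ)) := exp_le_exp.2 (by nlinarith)
  calc b * exp (-a) * δ * R ≤ b * exp (-(a * δ)) * δ * R := by gcongr
    _ = t ^ γ * (b * t ^ (-γ) * R * δ * exp (-(a * δ))) := by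
        linear_combination (-(b * R * δ * exp (-(a * δ)))) * hcancel
    _ ≤ t ^ γ * w t := mul_le_mul_of_nonneg_left hwt (rpow_nonneg ht.le _)

theorem continuousOn_weightedPower (hw : IsPositiveSupersolution γ p a b w) :
    ContinuousOn (weightedPower γ p w) (Ioi 0) := by
  refine (continuousOn_inv₀.mono fun s hs => ne_of_gt hs).mul
    (((continuousOn_id.rpow_const fun s hs => Or.inl (ne_of_gt hs)).mul
      (hw.continuousOn.mono Ioi_subset_Ici_self)).rpow_const fun s hs => Or.inl ?_)
  exact (mul_pos (rpow_pos_of_pos hs γ) (hw.pos s (mem_Ioi.1 hs).le)).ne'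

theorem weightedPower_nonneg (hw : IsPositiveSupersolution γ p a b w) {s : ℝ} (hs : 0 < s) :
    0 ≤ weightedPower γ p w s :=
  mul_nonneg (inv_nonneg.2 hs.le)
    (rpow_nonneg (mul_nonneg (rpow_nonneg hs.le _) (hw.pos s hs.le).le) _)

theorem intervalIntegrable_weightedPower (hw : IsPositiveSupersolution γ p a b w) {u v : ℝ}
    (hu : 0 < u) (hv : 0 < v) : IntervalIntegrable (weightedPower γ p w) volume u v :=
  (hw.continuousOn_weightedPower.mono fun _ hs =>
    lt_of_lt_of_le (lt_min hu hv) hs.1).intervalIntegrable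

theorem weightedPower_le_rpow (hw : IsPositiveSupersolution γ p a b w) (hpγ : p * γ ≤ 1) {s : ℝ}
    (hs : 1 ≤ s) : weightedPower γ p w s ≤ w s ^ p := by
  have hs0 : 0 < s := by linarith
  have hws := (hw.pos s hs0.le).le
  calc weightedPower γ p w s = s ^ (γ * p - 1) * w s ^ p := by
        rw [weightedPower, mul_rpow (rpow_nonneg hs0.le _) hws, ← rpow_mul hs0.le,
          rpow_sub_one hs0.ne']
        ring
    _ ≤ 1 * w s ^ p := mul_le_mul_of_nonneg_right
        (rpow_le_one_of_one_le_of_nonpos hs (by linarith)) (rpow_nonneg hws _)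
    _ = w s ^ p := one_mul _

theorem monotoneOn_weightedIntegral (hw : IsPositiveSupersolution γ p a b w) :
    MonotoneOn (weightedIntegral γ p w) (Ioi 0) := by
  intro x hx y hy hxy
  have := integral_interval_sub_left (hw.intervalIntegrable_weightedPower two_pos hy)
    (hw.intervalIntegrable_weightedPower two_pos hx)
  have := integral_nonneg (μ := volume) hxy fun s hs =>
    hw.weightedPower_nonneg (lt_of_lt_of_le hx hs.1)
  simp only [weightedIntegral]
  linarith

theorem exists_pos_le_rpow_mul (hw : IsPositiveSupersolution γ p a b w) (hγ0 : 0 ≤ γ)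
    (hγ1 : γ < 1) (ha : 0 ≤ a) (hb : 0 < b) : ∃ c₀ > 0, ∀ t ≥ 2, c₀ ≤ t ^ γ * w t := by
  have hint : IntervalIntegrable (fun s => w s ^ p) volume 0 1 :=
    (hw.continuousOn_rpow.mono fun s hs => by
      rw [uIcc_of_le zero_le_one] at hs; exact hs.1).intervalIntegrable
  refine ⟨b * exp (-a) * 1 * ∫ s in (0 : ℝ)..1, w s ^ p, ?_, fun t ht => ?_⟩
  · have := intervalIntegral_pos_of_pos_on hint
      (fun s hs => rpow_pos_of_pos (hw.pos s hs.1.le) p) one_pos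
    positivity
  · exact hw.mul_integral_le hγ0 hγ1 ha hb.le le_rfl zero_le_one one_pos le_rfl (by linarith)
      hint (fun s hs => rpow_nonneg (hw.pos s hs.1).le _) fun s _ => le_rfl

theorem tendsto_weightedIntegral_atTop (hw : IsPositiveSupersolution γ p a b w) (hγ0 : 0 ≤ γ)
    (hγ1 : γ < 1) (ha : 0 ≤ a) (hb : 0 < b) (hp : 0 ≤ p) :
    Tendsto (weightedIntegral γ p w) atTop atTop := by
  obtain ⟨c₀, hc₀, hle⟩ := hw.exists_pos_le_rpow_mul hγ0 hγ1 ha hb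
  have hlog : ∀ x ≥ 2, c₀ ^ p * log (x / 2) ≤ weightedIntegral γ p w x := by
    intro x hx
    have hinv : 0 ∉ uIcc 2 x := by rw [uIcc_of_le hx]; exact fun h => by linarith [h.1]
    rw [← integral_inv hinv, ← intervalIntegral.integral_const_mul]
    refine integral_mono_on hx
      ((intervalIntegrable_inv (fun s hs => ?_) continuousOn_id).const_mul _)
      (hw.intervalIntegrable_weightedPower two_pos (by linarith)) fun s hs => ?_
    · exact fun h => hinv (h ▸ hs)
    · have hs0 : 0 < s := by linarith [hs.1]
      rw [mul_comm, weightedPower]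
      exact mul_le_mul_of_nonneg_left (rpow_le_rpow hc₀.le (hle s hs.1) hp)
        (inv_nonneg.2 hs0.le)
  refine tendsto_atTop_mono' _ ((eventually_ge_atTop 2).mono hlog) ?_
  exact ((tendsto_log_atTop.comp (tendsto_id.atTop_div_const two_pos)).const_mul_atTop
    (rpow_pos_of_pos hc₀ p))

theorem hasDelayedRpowGrowth (hw : IsPositiveSupersolution γ p a b w) (hγ0 : 0 ≤ γ)
    (hγ1 : γ < 1) (ha : 0 ≤ a) (hb : 0 ≤ b) (hp : 0 ≤ p) (hpγ : p * γ ≤ 1) :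
    HasDelayedRpowGrowth (weightedIntegral γ p w) p (b * exp (-a)) 2 := by
  intro z δ x' x hz hδ hδ1 hzx' hx'x
  set K := b * exp (-a) * δ * weightedIntegral γ p w z
  have hK : 0 ≤ K := mul_nonneg (by positivity) (integral_nonneg hz fun s hs =>
    hw.weightedPower_nonneg (by linarith [hs.1]))
  have hx' : 0 < x' := by linarith
  have hlow : ∀ s ∈ Icc x' x, x⁻¹ * K ^ p ≤ weightedPower γ p w s := by
    intro s hs
    have hs0 : 0 < s := by linarith [hs.1]
    have hKs : K ≤ s ^ γ * w s := hw.mul_integral_le hγ0 hγ1 ha hb zero_le_two hz hδ hδ1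
      (hzx'.trans hs.1) (hw.intervalIntegrable_weightedPower two_pos (by linarith))
      (fun r hr => hw.weightedPower_nonneg (by linarith [hr.1]))
      fun r hr => hw.weightedPower_le_rpow hpγ (by linarith [hr.1])
    exact mul_le_mul (inv_anti₀ hs0 hs.2) (rpow_le_rpow hK hKs hp) (rpow_nonneg hK _)
      (inv_nonneg.2 hs0.le)
  have hsplit := integral_add_adjacent_intervals
    (hw.intervalIntegrable_weightedPower two_pos hx') (hw.intervalIntegrable_weightedPower hx'
      (by linarith) : IntervalIntegrable _ volume x' x)
  have hmono := integral_mono_on hx'x intervalIntegrable_const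
    (hw.intervalIntegrable_weightedPower hx' (by linarith)) hlow
  rw [intervalIntegral.integral_const, smul_eq_mul] at hmono
  simp only [weightedIntegral] at hsplit ⊢
  rw [div_eq_mul_inv, mul_assoc]
  linarith

end IsPositiveSupersolution

theorem ode_lemma_ii (γ p a b : ℝ) (hγ0 : 0 < γ) (hγ1 : γ < 1) (hp : 1 < p)
    (hpγ : p * γ ≤ 1) (ha : 0 < a) (hb : 0 < b) :
    ¬ ∃ w : ℝ → ℝ,
      ContDiffOn ℝ 1 w (Set.Ici 0) ∧
      (∀ t ∈ Set.Ici (0 : ℝ), 0 < w t) ∧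
      (∀ t > (0 : ℝ),
        deriv w t + a * w t ≥ b * ∫ s in (0 : ℝ)..t, (t - s) ^ (-γ) * w s ^ p) := by
  rintro ⟨w, hw, hpos, hmemory⟩
  have hsol : IsPositiveSupersolution γ p a b w := ⟨hw, hpos, hmemory⟩
  have hmono : MonotoneOn (weightedIntegral γ p w) (Ici 2) :=
    hsol.monotoneOn_weightedIntegral.mono fun _ hx => two_pos.trans_le (mem_Ici.1 hx)
  exact (hsol.hasDelayedRpowGrowth hγ0.le hγ1 ha.le hb.le (by linarith) hpγ).not_tendsto_atTop
    hp (by positivity) zero_le_two hmono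
    (hsol.tendsto_weightedIntegral_atTop hγ0.le hγ1 ha.le hb (by linarith))
end

section
/- For $\varepsilon > 0$, $A > 0$, $c > 0$, and $n \ge 1$, define $\Theta(x,y,\tau) = c\, e^{-\varepsilon\sqrt{A + (|x|^2+|y|^2)^2 + \tau^2}}$ on $\mathbb{H}^n = \mathbb{R}^n \times \mathbb{R}^n \times \mathbb{R}$. Then $\Delta_{\mathbb{H}}\Theta(\eta) \ge -2\varepsilon(Q+2)\,\Theta(\eta)$ for all $\eta \in \mathbb{H}^n$, where $Q = 2n+2$. -/
open Real

/-- The Heisenberg sub-Laplacian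
`Δ_H = Δ_x + Δ_y + 4(|x|²+|y|²)∂_τ² + 4∑ᵢ (xᵢ ∂²_{yᵢτ} - yᵢ ∂²_{xᵢτ})`
acting on a function of coordinates `(x, y, τ) ∈ ℝⁿ × ℝⁿ × ℝ`. -/
noncomputable def subLaplacian (n : ℕ) (f : (Fin n → ℝ) → (Fin n → ℝ) → ℝ → ℝ)
    (x y : Fin n → ℝ) (τ : ℝ) : ℝ :=
  (∑ i, deriv (fun s => deriv (fun u => f (Function.update x i u) y τ) s) (x i)) +
  (∑ i, deriv (fun s => deriv (fun u => f x (Function.update y i u) τ) s) (y i)) +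
  4 * (∑ i, (x i) ^ 2 + ∑ i, (y i) ^ 2) *
    deriv (fun s => deriv (fun u => f x y u) s) τ +
  4 * ∑ i, (x i * deriv (fun s => deriv (fun u => f x (Function.update y i u) s) (y i)) τ
          - y i * deriv (fun s => deriv (fun u => f (Function.update x i u) y s) (x i)) τ)

/-!
Write `r = |x|² + |y|²`, so that `Θ = Φ (A + r² + τ²)` with `Φ t = c e^{-ε√t}`. On functions
`G (r, τ)` the twisting terms of `Δ_ℍ` cancel, since `∂_{yᵢ}` and `∂_{xᵢ}` both act through `r`
and produce `xᵢ yᵢ - yᵢ xᵢ`; what remains is `4 r (∂_r² G + ∂_τ² G) + 4 n ∂_r G`. For `Θ` this is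
`16 r (r² + τ²) Φ'' + (8 n + 16) r Φ'`, where `Φ'' ≥ 0` and `Φ' t = -(ε / (2√t)) Φ t`. As
`r ≤ √(A + r² + τ²)`, we get `r Φ' ≥ -(ε / 2) Θ`, hence `Δ_ℍ Θ ≥ -(4 n + 8) ε Θ = -2ε(Q + 2) Θ`.
-/

section OneVariable

variable {f f' f'' : ℝ → ℝ} {K a : ℝ}

lemma hasDerivAt_comp_add_sq {d : ℝ} (h : HasDerivAt f d (K + a ^ 2)) :
    HasDerivAt (fun u => f (K + u ^ 2)) (d * (2 * a)) a := by
  have hsq : HasDerivAt (fun u : ℝ => K + u ^ 2) (2 * a) a := by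
    simpa using ((hasDerivAt_id a).pow 2).const_add K
  exact h.comp a hsq

lemma hasDerivAt_comp_add_sq_mul_two (h : HasDerivAt f' (f'' (K + a ^ 2)) (K + a ^ 2)) :
    HasDerivAt (fun u => f' (K + u ^ 2) * (2 * u))
      (4 * a ^ 2 * f'' (K + a ^ 2) + 2 * f' (K + a ^ 2)) a := by
  refine ((hasDerivAt_comp_add_sq h).mul ((hasDerivAt_id a).const_mul 2)).congr_deriv ?_
  simp only [id]
  ring

lemma deriv_comp_add_sq (h : HasDerivAt f (f' (K + a ^ 2)) (K + a ^ 2)) :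
    deriv (fun u => f (K + u ^ 2)) a = f' (K + a ^ 2) * (2 * a) :=
  (hasDerivAt_comp_add_sq h).deriv

lemma deriv_deriv_comp_add_sq (h : ∀ u, HasDerivAt f (f' (K + u ^ 2)) (K + u ^ 2))
    (h' : HasDerivAt f' (f'' (K + a ^ 2)) (K + a ^ 2)) :
    deriv (fun s => deriv (fun u => f (K + u ^ 2)) s) a
      = 4 * a ^ 2 * f'' (K + a ^ 2) + 2 * f' (K + a ^ 2) := by
  simp only [fun s => deriv_comp_add_sq (h s)]
  exact (hasDerivAt_comp_add_sq_mul_two h').deriv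

end OneVariable

lemma sum_update_sq {n : ℕ} (x : Fin n → ℝ) (i : Fin n) (u : ℝ) :
    ∑ j, Function.update x i u j ^ 2 = ∑ j, x j ^ 2 - x i ^ 2 + u ^ 2 := by
  rw [← Finset.add_sum_erase _ _ (Finset.mem_univ i),
    ← Finset.add_sum_erase _ _ (Finset.mem_univ i),
    Finset.sum_congr rfl fun j hj => by rw [Function.update_of_ne (Finset.ne_of_mem_erase hj)]]
  simp only [Function.update_self]
  ring

section Radial

variable {n : ℕ} {ψ ψ' ψ'' : ℝ → ℝ}

lemma deriv_comp_sum_update_sq (x : Fin n → ℝ) (i : Fin n)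
    (h : HasDerivAt ψ (ψ' (∑ j, x j ^ 2)) (∑ j, x j ^ 2)) :
    deriv (fun u => ψ (∑ j, Function.update x i u j ^ 2)) (x i)
      = ψ' (∑ j, x j ^ 2) * (2 * x i) := by
  simp only [sum_update_sq]
  rw [← sub_add_cancel (∑ j, x j ^ 2) (x i ^ 2)] at h
  simpa using deriv_comp_add_sq h

lemma sum_deriv_deriv_comp_sum_sq (h : ∀ ρ, HasDerivAt ψ (ψ' ρ) ρ)
    (h' : ∀ ρ, HasDerivAt ψ' (ψ'' ρ) ρ) (x : Fin n → ℝ) :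
    ∑ i, deriv (fun s => deriv (fun u => ψ (∑ j, Function.update x i u j ^ 2)) s) (x i)
      = 4 * (∑ i, x i ^ 2) * ψ'' (∑ i, x i ^ 2) + 2 * n * ψ' (∑ i, x i ^ 2) := by
  simp only [sum_update_sq, deriv_deriv_comp_add_sq (fun _ => h _) (h' _), sub_add_cancel,
    Finset.sum_add_distrib, ← Finset.sum_mul, ← Finset.mul_sum, Finset.sum_const,
    Finset.card_univ, Fintype.card_fin, nsmul_eq_mul]
  ring

variable {G Gr Grr : ℝ → ℝ → ℝ}

lemma subLaplacian_radial (hr : ∀ r τ, HasDerivAt (fun r => G r τ) (Gr r τ) r)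
    (hrr : ∀ r τ, HasDerivAt (fun r => Gr r τ) (Grr r τ) r) (x y : Fin n → ℝ) (τ : ℝ) :
    subLaplacian n (fun x y τ => G (∑ i, x i ^ 2 + ∑ i, y i ^ 2) τ) x y τ
      = 4 * (∑ i, x i ^ 2 + ∑ i, y i ^ 2) * (Grr (∑ i, x i ^ 2 + ∑ i, y i ^ 2) τ
          + deriv (fun s => deriv (fun u => G (∑ i, x i ^ 2 + ∑ i, y i ^ 2) u) s) τ)
        + 4 * n * Gr (∑ i, x i ^ 2 + ∑ i, y i ^ 2) τ := by
  have hx := sum_deriv_deriv_comp_sum_sq (ψ := fun ρ => G (ρ + ∑ i, y i ^ 2) τ)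
    (fun ρ => (hr _ τ).comp_add_const ρ _) (fun ρ => (hrr _ τ).comp_add_const ρ _) x
  have hy := sum_deriv_deriv_comp_sum_sq (ψ := fun ρ => G (∑ i, x i ^ 2 + ρ) τ)
    (fun ρ => (hr _ τ).comp_const_add _ ρ) (fun ρ => (hrr _ τ).comp_const_add _ ρ) y
  have hdx (i : Fin n) (s : ℝ) :=
    deriv_comp_sum_update_sq (ψ := fun ρ => G (ρ + ∑ i, y i ^ 2) s)
      (ψ' := fun ρ => Gr (ρ + ∑ i, y i ^ 2) s) x i ((hr _ s).comp_add_const _ _)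
  have hdy (i : Fin n) (s : ℝ) :=
    deriv_comp_sum_update_sq (ψ := fun ρ => G (∑ i, x i ^ 2 + ρ) s)
      (ψ' := fun ρ => Gr (∑ i, x i ^ 2 + ρ) s) y i ((hr _ s).comp_const_add _ _)
  beta_reduce at hx hy hdx hdy
  have hmix (i : Fin n) :
      x i * deriv (fun s => deriv (fun u =>
          G (∑ i, x i ^ 2 + ∑ j, Function.update y i u j ^ 2) s) (y i)) τ
        - y i * deriv (fun s => deriv (fun u =>
          G (∑ j, Function.update x i u j ^ 2 + ∑ i, y i ^ 2) s) (x i)) τ = 0 := by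
    rw [funext (hdx i), funext (hdy i), deriv_mul_const_field, deriv_mul_const_field]
    ring
  simp only [subLaplacian, hx, hy, hmix, Finset.sum_const_zero]
  ring

end Radial

section Profile

variable (ε c : ℝ) {t : ℝ}

noncomputable def expNegSqrtDeriv (t : ℝ) : ℝ :=
  -(ε / (2 * √t)) * (c * exp (-(ε * √t)))

noncomputable def expNegSqrtDeriv2 (t : ℝ) : ℝ :=
  (ε ^ 2 / (4 * t) + ε / (4 * t * √t)) * (c * exp (-(ε * √t)))

lemma hasDerivAt_mul_exp_neg_mul_sqrt (ht : 0 < t) :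
    HasDerivAt (fun t => c * exp (-(ε * √t))) (expNegSqrtDeriv ε c t) t := by
  have hs : √t ≠ 0 := (sqrt_pos.mpr ht).ne'
  refine ((((hasDerivAt_sqrt ht.ne').const_mul ε).neg).exp.const_mul c).congr_deriv ?_
  rw [expNegSqrtDeriv, Pi.neg_apply]
  field_simp

lemma hasDerivAt_expNegSqrtDeriv (ht : 0 < t) :
    HasDerivAt (expNegSqrtDeriv ε c) (expNegSqrtDeriv2 ε c t) t := by
  have hs : √t ≠ 0 := (sqrt_pos.mpr ht).ne'
  have hD : expNegSqrtDeriv ε c = fun t => -(ε / 2) * (√t)⁻¹ * (c * exp (-(ε * √t))) := by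
    funext t
    rw [expNegSqrtDeriv]
    ring
  rw [hD]
  refine ((((hasDerivAt_sqrt ht.ne').inv hs).const_mul _).mul
    (hasDerivAt_mul_exp_neg_mul_sqrt ε c ht)).congr_deriv ?_
  have ht2 : √t ^ 2 = t := sq_sqrt ht.le
  rw [expNegSqrtDeriv, expNegSqrtDeriv2, Pi.inv_apply]
  set q := √t
  rw [← ht2]
  field_simp
  ring

variable {ε c}

lemma expNegSqrtDeriv2_nonneg (hε : 0 ≤ ε) (hc : 0 ≤ c) (ht : 0 ≤ t) :
    0 ≤ expNegSqrtDeriv2 ε c t := by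
  unfold expNegSqrtDeriv2
  positivity

lemma neg_mul_le_mul_expNegSqrtDeriv (hε : 0 ≤ ε) (hc : 0 ≤ c) {s : ℝ} (hs : s ≤ √t) :
    -(ε / 2) * (c * exp (-(ε * √t))) ≤ s * expNegSqrtDeriv ε c t := by
  have hst : s / √t ≤ 1 := div_le_one_of_le₀ hs (sqrt_nonneg t)
  have h : s * expNegSqrtDeriv ε c t = -(ε / 2) * (c * exp (-(ε * √t))) * (s / √t) := by
    unfold expNegSqrtDeriv
    ring
  rw [h]
  exact le_mul_of_le_one_right
    (mul_nonpos_of_nonpos_of_nonneg (neg_nonpos.mpr (by positivity)) (by positivity)) hst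

end Profile

lemma subLaplacian_mul_exp_neg_mul_sqrt (n : ℕ) (ε A c : ℝ) (hA : 0 < A) (x y : Fin n → ℝ)
    (τ : ℝ) :
    subLaplacian n
        (fun x y τ => c * exp (-(ε * √(A + (∑ i, x i ^ 2 + ∑ i, y i ^ 2) ^ 2 + τ ^ 2)))) x y τ
      = 16 * (∑ i, x i ^ 2 + ∑ i, y i ^ 2) * ((∑ i, x i ^ 2 + ∑ i, y i ^ 2) ^ 2 + τ ^ 2)
          * expNegSqrtDeriv2 ε c (A + (∑ i, x i ^ 2 + ∑ i, y i ^ 2) ^ 2 + τ ^ 2)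
        + (8 * n + 16) * (∑ i, x i ^ 2 + ∑ i, y i ^ 2)
          * expNegSqrtDeriv ε c (A + (∑ i, x i ^ 2 + ∑ i, y i ^ 2) ^ 2 + τ ^ 2) := by
  have hΦ (K u : ℝ) (hK : 0 < K) :=
    hasDerivAt_mul_exp_neg_mul_sqrt ε c (t := K + u ^ 2) (by positivity)
  have hΦ' (K u : ℝ) (hK : 0 < K) :=
    hasDerivAt_expNegSqrtDeriv ε c (t := K + u ^ 2) (by positivity)
  have hr (r t : ℝ) : HasDerivAt (fun r => c * exp (-(ε * √(A + r ^ 2 + t ^ 2))))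
      (expNegSqrtDeriv ε c (A + r ^ 2 + t ^ 2) * (2 * r)) r := by
    convert hasDerivAt_comp_add_sq (hΦ (A + t ^ 2) r (by positivity)) using 1 <;>
      simp only [add_right_comm]
  have hrr (r t : ℝ) : HasDerivAt (fun r => expNegSqrtDeriv ε c (A + r ^ 2 + t ^ 2) * (2 * r))
      (4 * r ^ 2 * expNegSqrtDeriv2 ε c (A + r ^ 2 + t ^ 2)
        + 2 * expNegSqrtDeriv ε c (A + r ^ 2 + t ^ 2)) r := by
    convert hasDerivAt_comp_add_sq_mul_two (hΦ' (A + t ^ 2) r (by positivity)) using 1 <;>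
      simp only [add_right_comm]
  rw [subLaplacian_radial hr hrr,
    deriv_deriv_comp_add_sq (fun u => hΦ _ u (by positivity)) (hΦ' _ τ (by positivity))]
  ring

theorem subLaplacian_exp_lower_bound_general (n : ℕ) (ε A c : ℝ)
    (hε : 0 < ε) (hA : 0 < A) (hc : 0 < c) :
    ∀ (x y : Fin n → ℝ) (τ : ℝ),
      subLaplacian n
        (fun x y τ =>
          c * Real.exp (-(ε * Real.sqrt (A + (∑ i, (x i) ^ 2 + ∑ i, (y i) ^ 2) ^ 2 + τ ^ 2))))
        x y τ
      ≥ -(2 * ε * ((2 * n + 2 : ℝ) + 2)) *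
        (c * Real.exp (-(ε * Real.sqrt (A + (∑ i, (x i) ^ 2 + ∑ i, (y i) ^ 2) ^ 2 + τ ^ 2)))) := by
  intro x y τ
  rw [subLaplacian_mul_exp_neg_mul_sqrt n ε A c hA]
  set r := ∑ i, x i ^ 2 + ∑ i, y i ^ 2
  have hr_le : r ≤ √(A + r ^ 2 + τ ^ 2) := le_sqrt_of_sq_le (by linarith [sq_nonneg τ])
  have h2 : 0 ≤ r * (r ^ 2 + τ ^ 2) * expNegSqrtDeriv2 ε c (A + r ^ 2 + τ ^ 2) :=
    mul_nonneg (by positivity) (expNegSqrtDeriv2_nonneg hε.le hc.le (by positivity))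
  have h1 := neg_mul_le_mul_expNegSqrtDeriv hε.le hc.le hr_le
  have hcoef : (0 : ℝ) ≤ 8 * n + 16 := by positivity
  linarith [mul_le_mul_of_nonneg_left h1 hcoef]

theorem subLaplacian_exp_lower_bound (n : ℕ) (hn : 1 ≤ n) (ε A c : ℝ)
    (hε : 0 < ε) (hA : 0 < A) (hc : 0 < c) :
    ∀ (x y : Fin n → ℝ) (τ : ℝ),
      subLaplacian n
        (fun x y τ =>
          c * Real.exp (-(ε * Real.sqrt (A + (∑ i, (x i) ^ 2 + ∑ i, (y i) ^ 2) ^ 2 + τ ^ 2))))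
        x y τ
      ≥ -(2 * ε * ((2 * n + 2 : ℝ) + 2)) *
        (c * Real.exp (-(ε * Real.sqrt (A + (∑ i, (x i) ^ 2 + ∑ i, (y i) ^ 2) ^ 2 + τ ^ 2)))) :=
  subLaplacian_exp_lower_bound_general n ε A c hε hA hc
end

section
/- Let $0 \le \gamma < 1$, $a \ge 0$, and let $f : [0,T] \to [0,\infty)$ be continuous with $f(0) > 0$, $f$ of class $C^1$, satisfying $f'(t) + f(t) \ge \int_0^t (t-s)^{-\gamma} f(s)^p\,ds$ on $[0,T]$ where $p > 1$. If $\gamma = 0$, then $T < \infty$; i.e., no such $f$ can exist on $[0,\infty)$. -/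
/-!
Multiplying by `eᵗ`, `(eᵗ f)' = eᵗ (f' + f) ≥ eᵗ F` with `F t = ∫₀ᵗ f ^ p` nondecreasing, so `f`
stays positive and `f t ≥ (1 - e^(s - t)) F s` for `s ≤ t`. Hence `f` is eventually bounded below
by a positive constant, `F` grows at least linearly, and `f t ≥ (1 - e⁻¹) F (t - 1)` forces both
to infinity. For `q = (p + 1) / 2` the function `Φ = f + F ^ (1 / q)` then satisfies
`Φ' ≥ F - f + q⁻¹ F ^ (1 / q - 1) f ^ p ≥ ε Φ ^ q` for some `ε > 0` and all large `t` (compare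
the larger of `f` and `F ^ (1 / q)`), so `Φ ^ (1 - q) + (q - 1) ε t` is nonincreasing, which is
absurd as it tends to `∞`.
-/

open MeasureTheory intervalIntegral

open Set Filter Real

theorem exp_mul_add_mul_le_of_le_deriv_add {f f' : ℝ → ℝ} {a b c : ℝ} (hab : a ≤ b)
    (hf : ContinuousOn f (Icc a b)) (hf' : ∀ x ∈ Ioo a b, HasDerivAt f (f' x) x)
    (hc : ∀ x ∈ Ioo a b, c ≤ f' x + f x) :
    exp a * f a + (exp b - exp a) * c ≤ exp b * f b := by
  have hmono : MonotoneOn (fun x => exp x * (f x - c)) (Icc a b) := by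
    refine monotoneOn_of_hasDerivWithinAt_nonneg (f' := fun x => exp x * (f' x + f x - c))
      (convex_Icc a b) (continuous_exp.continuousOn.mul (hf.sub continuousOn_const)) ?_ ?_
    all_goals rw [interior_Icc]; intro x hx
    · exact (((hasDerivAt_exp x).mul ((hf' x hx).sub_const c)).congr_deriv
        (by ring)).hasDerivWithinAt
    · exact mul_nonneg (exp_pos x).le (by linarith [hc x hx])
  linarith [hmono ⟨le_rfl, hab⟩ ⟨hab, le_rfl⟩ hab]

theorem false_of_eventually_mul_rpow_le_deriv {Φ Φ' : ℝ → ℝ} {q ε : ℝ} (hq : 1 < q)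
    (hε : 0 < ε) (h : ∀ᶠ t in atTop, 0 < Φ t ∧ HasDerivAt Φ (Φ' t) t ∧ ε * Φ t ^ q ≤ Φ' t) :
    False := by
  obtain ⟨T, hT⟩ := eventually_atTop.1 h
  set ψ := fun t => Φ t ^ (1 - q) + (q - 1) * ε * t
  have hψ : ∀ t ∈ Ici T,
      HasDerivAt ψ (Φ' t * (1 - q) * Φ t ^ (1 - q - 1) + (q - 1) * ε * 1) t := fun t ht =>
    ((hT t ht).2.1.rpow_const (Or.inl (hT t ht).1.ne')).add ((hasDerivAt_id t).const_mul _)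
  -- `ψ' = (1 - q) Φ⁻ᵠ Φ' + (q - 1) ε ≤ 0` is the inequality `ε Φ ^ q ≤ Φ'` rescaled.
  have hψ_anti : AntitoneOn ψ (Ici T) := by
    refine antitoneOn_of_hasDerivWithinAt_nonpos
      (f' := fun t => Φ' t * (1 - q) * Φ t ^ (1 - q - 1) + (q - 1) * ε * 1) (convex_Ici T)
      (fun t ht => (hψ t ht).continuousAt.continuousWithinAt) ?_ ?_
    all_goals rw [interior_Ici]; intro t ht
    · exact (hψ t (mem_Ici.2 ht.le)).hasDerivWithinAt
    obtain ⟨hΦ, -, hΦ'⟩ := hT t ht.le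
    have hcancel : Φ t ^ q * Φ t ^ (1 - q - 1) = 1 := by
      rw [← rpow_add hΦ]; norm_num
    have := mul_le_mul_of_nonneg_right hΦ' (rpow_pos_of_pos hΦ (1 - q - 1)).le
    rw [mul_assoc, hcancel] at this
    nlinarith
  have hlin : Tendsto (fun t => (q - 1) * ε * t) atTop atTop :=
    tendsto_id.const_mul_atTop (by nlinarith)
  obtain ⟨t, ht, hTt⟩ := ((hlin.eventually_gt_atTop (ψ T)).and (eventually_ge_atTop T)).exists
  have hψt := hψ_anti self_mem_Ici hTt hTt
  have := rpow_pos_of_pos (hT t hTt).1 (1 - q)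
  simp only [ψ] at hψt ht
  linarith

theorem mul_add_rpow_le_rpow_sub_add {p q x u : ℝ} (hq : 1 < q) (hpq : p = 2 * q - 1)
    (hx : 0 < x) (hu : 0 < u) (hxq : 2 * q ≤ x ^ (q - 1)) (huq : 2 ≤ u ^ (q - 1)) :
    q⁻¹ / 2 ^ (q + 1) * (x + u) ^ q ≤ u ^ q - x + q⁻¹ * u ^ (1 - q) * x ^ p := by
  have hq_pos : 0 < q := by linarith
  have hmax : (x + u) ^ q ≤ 2 ^ q * max x u ^ q := by
    rw [← mul_rpow zero_le_two (hx.le.trans (le_max_left x u))]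
    exact rpow_le_rpow (by positivity) (by linarith [le_max_left x u, le_max_right x u]) hq_pos.le
  have hε : q⁻¹ / 2 ^ (q + 1) * (x + u) ^ q ≤ q⁻¹ / 2 * max x u ^ q := by
    calc q⁻¹ / 2 ^ (q + 1) * (x + u) ^ q ≤ q⁻¹ / 2 ^ (q + 1) * (2 ^ q * max x u ^ q) := by
          gcongr
      _ = q⁻¹ / 2 * max x u ^ q := by
          rw [rpow_add_one two_ne_zero]; field_simp
  refine hε.trans ?_
  have hq_inv : q⁻¹ ≤ 1 := inv_le_one_of_one_le₀ hq.le
  rcases le_total x u with hxu | hux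
  · -- `u ^ q = u * u ^ (q - 1) ≥ 2 u`, so `u ^ q - x ≥ u ^ q / 2`.
    have hu_pow : u ^ q = u * u ^ (q - 1) := by
      rw [mul_comm, ← rpow_add_one hu.ne', sub_add_cancel]
    have hlast : 0 ≤ q⁻¹ * u ^ (1 - q) * x ^ p := by positivity
    rw [max_eq_right hxu]
    nlinarith [rpow_pos_of_pos hu q]
  · -- `u ≤ x` gives `u ^ (1 - q) * x ^ p ≥ x ^ (1 - q + p) = x ^ q`.
    have hx_pow : x ^ q = x * x ^ (q - 1) := by
      rw [mul_comm, ← rpow_add_one hx.ne', sub_add_cancel]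
    have hux_pow : x ^ q ≤ u ^ (1 - q) * x ^ p := by
      calc x ^ q = x ^ (1 - q) * x ^ p := by rw [← rpow_add hx, hpq]; ring_nf
        _ ≤ u ^ (1 - q) * x ^ p := by
          gcongr ?_ * _
          exact rpow_le_rpow_of_nonpos hu hux (by linarith)
    rw [max_eq_left hux]
    have hu_pow_nonneg : 0 ≤ u ^ q := by positivity
    have hx_le : 2 * q * x ≤ x ^ q := by rw [hx_pow]; nlinarith
    have hx_le' : x ≤ q⁻¹ / 2 * x ^ q := by
      rw [div_mul_eq_mul_div, le_div_iff₀ two_pos, inv_mul_eq_div, le_div_iff₀ hq_pos]; linarith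
    nlinarith [mul_le_mul_of_nonneg_left hux_pow (inv_nonneg.2 hq_pos.le)]

section IntegralFromZero

variable {g : ℝ → ℝ}

theorem integral_add_mul_sub_le_integral {s t c : ℝ} (hg : ContinuousOn g (Ici 0)) (hs : 0 ≤ s)
    (hst : s ≤ t) (hgc : ∀ x ∈ Icc s t, c ≤ g x) :
    (∫ x in 0..s, g x) + c * (t - s) ≤ ∫ x in 0..t, g x := by
  have hint : ∀ a b, 0 ≤ a → a ≤ b → IntervalIntegrable g volume a b := fun a b ha hab =>
    (hg.mono (Icc_subset_Ici_self.trans (Ici_subset_Ici.2 ha))).intervalIntegrable_of_Icc hab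
  rw [← integral_add_adjacent_intervals (hint 0 s le_rfl hs) (hint s t hs hst)]
  have : c * (t - s) ≤ ∫ x in s..t, g x := by
    simpa [mul_comm] using integral_mono_on hst intervalIntegrable_const (hint s t hs hst) hgc
  linarith

theorem monotoneOn_integral_of_nonneg (hg : ContinuousOn g (Ici 0))
    (hg_nonneg : ∀ x ∈ Ici 0, 0 ≤ g x) : MonotoneOn (fun t => ∫ x in 0..t, g x) (Ici 0) :=
  fun s hs _ _ hst => by
    simpa using
      integral_add_mul_sub_le_integral hg hs hst fun x hx => hg_nonneg x (hs.trans hx.1)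

theorem tendsto_integral_atTop_of_le {a c : ℝ} (hg : ContinuousOn g (Ici 0)) (ha : 0 ≤ a)
    (hc : 0 < c) (hgc : ∀ x ∈ Ici a, c ≤ g x) :
    Tendsto (fun t => ∫ x in 0..t, g x) atTop atTop := by
  refine tendsto_atTop_mono' _ ?_ (tendsto_atTop_add_const_left _ (∫ x in 0..a, g x)
    ((tendsto_atTop_add_const_right _ (-a) tendsto_id).const_mul_atTop hc))
  filter_upwards [eventually_ge_atTop a] with t ht
  simpa [← sub_eq_add_neg] using
    integral_add_mul_sub_le_integral hg ha ht fun x hx => hgc x hx.1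

theorem hasDerivAt_integral_of_continuousOn_Ici (hg : ContinuousOn g (Ici 0)) {t : ℝ}
    (ht : 0 < t) : HasDerivAt (fun u => ∫ x in 0..u, g x) (g t) t :=
  integral_hasDerivAt_right ((hg.mono Icc_subset_Ici_self).intervalIntegrable_of_Icc ht.le)
    ((hg.mono Ioi_subset_Ici_self).stronglyMeasurableAtFilter isOpen_Ioi t ht)
    (hg.continuousAt (Ici_mem_nhds ht))

end IntegralFromZero

section LowerSolution

variable {f f' F : ℝ → ℝ}

theorem one_sub_exp_mul_le_of_le_deriv_add (hf : ContinuousOn f (Ici 0))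
    (hf' : ∀ t ∈ Ioi 0, HasDerivAt f (f' t) t) (hF : MonotoneOn F (Ici 0))
    (hineq : ∀ t ∈ Ioi 0, F t ≤ f' t + f t) {s t : ℝ} (hs : 0 ≤ s) (hst : s ≤ t)
    (hfs : 0 ≤ f s) : (1 - exp (s - t)) * F s ≤ f t := by
  have key := exp_mul_add_mul_le_of_le_deriv_add hst
    (hf.mono (Icc_subset_Ici_self.trans (Ici_subset_Ici.2 hs)))
    (fun x hx => hf' x (hs.trans_lt hx.1))
    (fun x hx => (hF hs (hs.trans hx.1.le) hx.1.le).trans (hineq x (hs.trans_lt hx.1)))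
  have : (1 - exp (s - t)) * F s * exp t = (exp t - exp s) * F s := by
    rw [exp_sub]; field_simp
  rw [← mul_le_mul_iff_left₀ (exp_pos t), this]
  nlinarith [exp_pos s]

theorem tendsto_atTop_of_le_deriv_add (hf : ContinuousOn f (Ici 0))
    (hf' : ∀ t ∈ Ioi 0, HasDerivAt f (f' t) t) (hF : MonotoneOn F (Ici 0))
    (hineq : ∀ t ∈ Ioi 0, F t ≤ f' t + f t) (hf_nonneg : ∀ t ∈ Ici 0, 0 ≤ f t)
    (hF_top : Tendsto F atTop atTop) : Tendsto f atTop atTop := by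
  refine tendsto_atTop_mono' _ ?_ ((hF_top.comp (tendsto_atTop_add_const_right _ (-1)
    tendsto_id)).const_mul_atTop (sub_pos.2 (exp_lt_one_iff.2 neg_one_lt_zero)))
  filter_upwards [eventually_ge_atTop 1] with t ht
  have hs : 0 ≤ t + -1 := by linarith
  have := one_sub_exp_mul_le_of_le_deriv_add hf hf' hF hineq hs (by linarith) (hf_nonneg _ hs)
  rwa [add_sub_cancel_left] at this

end LowerSolution

theorem tendsto_atTop_of_integral_rpow_le_deriv_add {f f' : ℝ → ℝ} {p : ℝ} (hp : 0 < p)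
    (hf : ContinuousOn f (Ici 0)) (hf_nonneg : ∀ t ∈ Ici 0, 0 ≤ f t) (hf0 : 0 < f 0)
    (hf' : ∀ t ∈ Ioi 0, HasDerivAt f (f' t) t)
    (hineq : ∀ t ∈ Ioi 0, ∫ s in 0..t, f s ^ p ≤ f' t + f t) :
    Tendsto f atTop atTop ∧ Tendsto (fun t => ∫ s in 0..t, f s ^ p) atTop atTop := by
  set F := fun t => ∫ s in 0..t, f s ^ p
  have hg : ContinuousOn (fun s => f s ^ p) (Ici 0) := hf.rpow_const fun _ _ => Or.inr hp.le
  have hF_mono : MonotoneOn F (Ici 0) :=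
    monotoneOn_integral_of_nonneg hg fun x hx => rpow_nonneg (hf_nonneg x hx) p
  have hF_nonneg : ∀ t ∈ Ici 0, 0 ≤ F t := fun t ht => by
    simpa [F] using hF_mono self_mem_Ici ht ht
  have hf_pos : ∀ t ∈ Ici 0, 0 < f t := by
    intro t ht
    have := exp_mul_add_mul_le_of_le_deriv_add (c := 0) ht (hf.mono Icc_subset_Ici_self)
      (fun x hx => hf' x hx.1) fun x hx => (hF_nonneg x hx.1.le).trans (hineq x hx.1)
    simp only [exp_zero, one_mul, mul_zero, add_zero] at this
    exact pos_of_mul_pos_right (hf0.trans_le this) (exp_pos t).le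
  have hF1 : 0 < F 1 := intervalIntegral_pos_of_pos_on
    ((hg.mono Icc_subset_Ici_self).intervalIntegrable_of_Icc zero_le_one)
    (fun x hx => rpow_pos_of_pos (hf_pos x hx.1.le) p) one_pos
  set θ := 1 - exp (-1)
  have hθ : 0 < θ := sub_pos.2 (exp_lt_one_iff.2 neg_one_lt_zero)
  have hf_ge : ∀ t ∈ Ici 2, θ * F 1 ≤ f t := fun t ht =>
    calc θ * F 1 ≤ (1 - exp (1 - t)) * F 1 := mul_le_mul_of_nonneg_right
          (sub_le_sub_left (exp_le_exp.2 (by linarith [mem_Ici.1 ht])) 1) hF1.le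
      _ ≤ f t := one_sub_exp_mul_le_of_le_deriv_add hf hf' hF_mono hineq zero_le_one
          (by linarith [mem_Ici.1 ht]) (hf_nonneg 1 (mem_Ici.2 zero_le_one))
  have hF_top : Tendsto F atTop atTop :=
    tendsto_integral_atTop_of_le hg zero_le_two (rpow_pos_of_pos (mul_pos hθ hF1) p)
      fun t ht => rpow_le_rpow (mul_pos hθ hF1).le (hf_ge t ht) hp.le
  exact ⟨tendsto_atTop_of_le_deriv_add hf hf' hF_mono hineq hf_nonneg hF_top, hF_top⟩

theorem false_of_tendsto_atTop_of_le_deriv_add {f f' F : ℝ → ℝ} {p : ℝ} (hp : 1 < p)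
    (hf : Tendsto f atTop atTop) (hF : Tendsto F atTop atTop)
    (hf' : ∀ᶠ t in atTop, HasDerivAt f (f' t) t)
    (hF' : ∀ᶠ t in atTop, HasDerivAt F (f t ^ p) t)
    (hineq : ∀ᶠ t in atTop, F t ≤ f' t + f t) : False := by
  set q := (p + 1) / 2 with hq_def
  have hq : 1 < q := by linarith
  have hpq : p = 2 * q - 1 := by linarith
  set u := fun t => F t ^ q⁻¹
  have hu : Tendsto u atTop atTop := (tendsto_rpow_atTop (inv_pos.2 (by linarith))).comp hF
  have hpow : Tendsto (fun x : ℝ => x ^ (q - 1)) atTop atTop := tendsto_rpow_atTop (by linarith)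
  refine false_of_eventually_mul_rpow_le_deriv (Φ := fun t => f t + u t)
    (Φ' := fun t => f' t + f t ^ p * q⁻¹ * F t ^ (q⁻¹ - 1)) hq
    (ε := q⁻¹ / 2 ^ (q + 1)) (by positivity) ?_
  filter_upwards [hf', hF', hineq, hf.eventually_gt_atTop 0, hF.eventually_gt_atTop 0,
    (hpow.comp hf).eventually_ge_atTop (2 * q), (hpow.comp hu).eventually_ge_atTop 2]
    with t hft hFt hineqt hf_pos hF_pos hfq huq
  have hu_pos : 0 < u t := rpow_pos_of_pos hF_pos _
  refine ⟨add_pos hf_pos hu_pos, hft.add (hFt.rpow_const (Or.inl hF_pos.ne')), ?_⟩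
  have hFu : u t ^ q = F t := rpow_inv_rpow hF_pos.le (by linarith)
  have hFu' : u t ^ (1 - q) = F t ^ (q⁻¹ - 1) := by
    rw [← rpow_mul hF_pos.le]; congr 1; field_simp
  have := mul_add_rpow_le_rpow_sub_add hq hpq hf_pos hu_pos hfq huq
  rw [hFu, hFu'] at this
  linarith

theorem gamma_zero_blowup (p : ℝ) (hp : 1 < p) :
    ¬ ∃ f : ℝ → ℝ,
      ContDiffOn ℝ 1 f (Set.Ici 0) ∧
      (∀ t ∈ Set.Ici (0 : ℝ), 0 ≤ f t) ∧
      0 < f 0 ∧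
      (∀ t ∈ Set.Ici (0 : ℝ),
        deriv f t + f t ≥ ∫ s in (0 : ℝ)..t, f s ^ p) := by
  rintro ⟨f, hf, hf_nonneg, hf0, hineq⟩
  have hfc : ContinuousOn f (Ici 0) := hf.continuousOn
  have hf' : ∀ t ∈ Ioi 0, HasDerivAt f (deriv f t) t := fun t ht =>
    ((hf.differentiableOn one_ne_zero t (Ioi_subset_Ici_self ht)).differentiableAt
      (Ici_mem_nhds ht)).hasDerivAt
  have hineq' : ∀ t ∈ Ioi 0, ∫ s in 0..t, f s ^ p ≤ deriv f t + f t := fun t ht =>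
    hineq t (Ioi_subset_Ici_self ht)
  obtain ⟨hf_top, hF_top⟩ :=
    tendsto_atTop_of_integral_rpow_le_deriv_add (by linarith) hfc hf_nonneg hf0 hf' hineq'
  have hg : ContinuousOn (fun s => f s ^ p) (Ici 0) :=
    hfc.rpow_const fun _ _ => Or.inr (by linarith)
  exact false_of_tendsto_atTop_of_le_deriv_add hp hf_top hF_top
    ((eventually_gt_atTop 0).mono hf') ((eventually_gt_atTop 0).mono fun t ht =>
      hasDerivAt_integral_of_continuousOn_Ici hg ht) ((eventually_gt_atTop 0).mono hineq')
end
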